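/- arXiv:2312.12992 — 6 statements merged into one kernel-verified Lean document; each statement's English description precedes it below -/
import Mathlib

section
/- For all integers m ≥ 1 and n ≥ 1, the (mn)-th Chebyshev norm of the star E_m equals 2; that is, inf{ sup_{z ∈ E_m} |P(z)| : P ∈ ℂ[X] monic of degree mn } = 2. -/
/-- The `n`-th Chebyshev norm of a set `E ⊆ ℂ`:
`t_n(E) = inf { sup_{z ∈ E} |P(z)| : P monic of degree n }`. -/
noncomputable def chebNorm (E : Set ℂ) (n : ℕ) : ℝ :=
  sInf { r : ℝ | ∃ P : Polynomial ℂ, P.Monic ∧ P.natDegree = n ∧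
    r = ⨆ z ∈ E, ‖P.eval z‖ }

/-- The star `E_m = { z ∈ ℂ : z^m ∈ [-2, 2] }`. -/
def Estar (m : ℕ) : Set ℂ := { z : ℂ | ∃ x ∈ Set.Icc (-2 : ℝ) 2, (x : ℂ) = z ^ m }

/-!
The upper bound is attained by `C_n(z^m)`, where `C_n` is the monic Chebyshev polynomial with
`C_n(w + w⁻¹) = w^n + w⁻ⁿ`: on `E_m` we have `z^m = w + w⁻¹` with `|w| = 1`.

For the lower bound let `P` be monic of degree `mn`, `ζ` a primitive `m`-th and `ω` a primitive
`2n`-th root of unity. Averaging over rotations, `∑_{k<m} P(ζ^k z) = m Q(z^m)` where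
`Q = contract m P` is monic of degree `n`. The points `x_j = ω^j + ω^{-j}` lie in `[-2, 2]`, and
`∑_{j<2n} (-1)^j Q(x_j) = 4n` because `(-1)^j x_j^i` expands into powers of `ω^j` whose sums over
`j` vanish unless `i = n`. Taking `z_j` with `z_j^m = x_j`, the number `4mn` is a sum of `2mn`
values of `±P` on `E_m`, so `sup_{E_m} |P| ≥ 2`.
-/

open Polynomial Finset

theorem Polynomial.contract_monomial {R : Type*} [CommSemiring R] {N : ℕ} (hN : N ≠ 0) (i : ℕ)
    (c : R) : contract N (monomial i c) = if N ∣ i then monomial (i / N) c else 0 := by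
  by_cases hi : N ∣ i
  · obtain ⟨q, rfl⟩ := hi
    rw [if_pos (dvd_mul_right N q), Nat.mul_div_cancel_left _ (Nat.pos_of_ne_zero hN)]
    ext t
    simp only [coeff_contract hN, coeff_monomial, mul_comm t,
      Nat.mul_left_cancel_iff (Nat.pos_of_ne_zero hN)]
  · rw [if_neg hi]
    ext t
    rw [coeff_contract hN, coeff_monomial, coeff_zero, if_neg]
    rintro rfl
    exact hi (dvd_mul_left N t)

theorem Polynomial.natDegree_contract_le {R : Type*} [CommSemiring R] {N : ℕ} (hN : N ≠ 0)
    (f : R[X]) : (contract N f).natDegree ≤ f.natDegree / N :=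
  natDegree_le_iff_coeff_eq_zero.mpr fun t ht => by
    rw [coeff_contract hN]
    exact coeff_eq_zero_of_natDegree_lt ((Nat.div_lt_iff_lt_mul (Nat.pos_of_ne_zero hN)).mp ht)

theorem two_mul_dvd_sub_add_two_mul_iff {n i l : ℕ} (hn : n ≠ 0) (hi : i ≤ n) (hl : l ≤ i) :
    2 * n ∣ n - i + 2 * l ↔ i = n ∧ (l = 0 ∨ l = n) := by
  constructor
  · rintro ⟨c, hc⟩
    have hc1 : c ≤ 1 := by
      by_contra! h
      have : 2 * n * 2 ≤ 2 * n * c := Nat.mul_le_mul_left _ h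
      omega
    interval_cases c <;> omega
  · rintro ⟨rfl, rfl | rfl⟩
    · simp
    · exact ⟨1, by omega⟩

namespace IsPrimitiveRoot

variable {K : Type*} [Field K] {ζ ω : K} {N n : ℕ}

theorem geom_sum_pow_eq (hζ : IsPrimitiveRoot ζ N) (e : ℕ) :
    ∑ j ∈ range N, (ζ ^ e) ^ j = if N ∣ e then (N : K) else 0 := by
  split_ifs with h
  · obtain ⟨q, rfl⟩ := h
    simp [pow_mul, hζ.pow_eq_one]
  · have hne : ζ ^ e ≠ 1 := fun he => h ((hζ.pow_eq_one_iff_dvd e).mp he)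
    rw [geom_sum_eq hne, ← pow_mul, mul_comm, pow_mul, hζ.pow_eq_one, one_pow, sub_self,
      zero_div]

theorem sum_eval_mul_pow (hζ : IsPrimitiveRoot ζ N) (P : K[X]) (z : K) :
    ∑ k ∈ range N, P.eval (ζ ^ k * z) = N * (contract N P).eval (z ^ N) := by
  rcases eq_or_ne N 0 with rfl | hN
  · simp
  induction P using Polynomial.induction_on' with
  | add P Q hP hQ => simp only [eval_add, sum_add_distrib, hP, hQ, contract_add hN, mul_add]
  | monomial i c =>
    calc ∑ k ∈ range N, (monomial i c).eval (ζ ^ k * z)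
        = c * z ^ i * ∑ k ∈ range N, (ζ ^ i) ^ k := by
          rw [mul_sum]
          refine sum_congr rfl fun k _ => ?_
          rw [eval_monomial, mul_pow, ← pow_mul, ← pow_mul, mul_comm k i]
          ring
      _ = N * (contract N (monomial i c)).eval (z ^ N) := by
          rw [hζ.geom_sum_pow_eq, contract_monomial hN]
          split_ifs with h
          · obtain ⟨q, rfl⟩ := h
            rw [eval_monomial, Nat.mul_div_cancel_left _ (Nat.pos_of_ne_zero hN), pow_mul]
            ring
          · simp

theorem neg_one_pow_mul_add_inv_pow (hω : IsPrimitiveRoot ω (2 * n)) (hn : n ≠ 0) {i : ℕ}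
    (hi : i ≤ n) (j : ℕ) :
    (-1) ^ j * (ω ^ j + (ω ^ j)⁻¹) ^ i =
      ∑ l ∈ range (i + 1), (ω ^ (n - i + 2 * l)) ^ j * i.choose l := by
  have hω_n : ω ^ n = -1 := by
    have h2 := hω.pow_of_dvd hn (dvd_mul_left n 2)
    rw [Nat.mul_div_cancel _ (Nat.pos_of_ne_zero hn)] at h2
    exact h2.eq_neg_one_of_two_right
  have hw : ω ^ j ≠ 0 := pow_ne_zero _ (hω.ne_zero (by omega))
  set w := ω ^ j
  calc (-1) ^ j * (w + w⁻¹) ^ i = w ^ (n - i) * (w ^ 2 + 1) ^ i := by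
        have hsign : (-1) ^ j = w ^ (n - i) * w ^ i := by
          rw [← pow_add, Nat.sub_add_cancel hi, ← hω_n, ← pow_mul, ← pow_mul, mul_comm]
        rw [hsign, mul_assoc, ← mul_pow, mul_add, mul_inv_cancel₀ hw, sq]
    _ = _ := by
        rw [add_pow, mul_sum]
        refine sum_congr rfl fun l _ => ?_
        rw [one_pow, mul_one, ← pow_mul, ← pow_mul, ← pow_mul, ← pow_mul]
        ring

theorem sum_neg_one_pow_mul_add_inv_pow (hω : IsPrimitiveRoot ω (2 * n)) {i : ℕ} (hi : i ≤ n) :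
    ∑ j ∈ range (2 * n), (-1) ^ j * (ω ^ j + (ω ^ j)⁻¹) ^ i =
      if i = n then (4 * n : K) else 0 := by
  rcases eq_or_ne n 0 with rfl | hn
  · simp
  simp_rw [hω.neg_one_pow_mul_add_inv_pow hn hi]
  rw [sum_comm]
  simp_rw [← sum_mul, hω.geom_sum_pow_eq]
  split_ifs with hin
  · subst hin
    rw [sum_eq_add 0 i (Ne.symm hn)]
    · simp only [tsub_self, mul_zero, zero_add, add_zero, dvd_zero, dvd_refl, if_true,
        Nat.choose_zero_right, Nat.choose_self]
      push_cast
      ring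
    · intro l hl hl0
      rw [if_neg, zero_mul]
      rw [two_mul_dvd_sub_add_two_mul_iff hn le_rfl (Nat.lt_succ_iff.mp (mem_range.mp hl))]
      tauto
    · simp
    · simp
  · refine sum_eq_zero fun l hl => ?_
    rw [if_neg, zero_mul]
    rw [two_mul_dvd_sub_add_two_mul_iff hn hi (Nat.lt_succ_iff.mp (mem_range.mp hl))]
    tauto

theorem sum_neg_one_pow_mul_eval_add_inv (hω : IsPrimitiveRoot ω (2 * n)) {Q : K[X]}
    (hQ : Q.natDegree ≤ n) :
    ∑ j ∈ range (2 * n), (-1) ^ j * Q.eval (ω ^ j + (ω ^ j)⁻¹) = 4 * n * Q.coeff n := by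
  simp_rw [eval_eq_sum_range' (Nat.lt_succ_of_le hQ), mul_sum]
  rw [sum_comm]
  simp_rw [mul_left_comm _ (Q.coeff _), ← mul_sum]
  rw [sum_congr rfl fun i hi => by
    rw [hω.sum_neg_one_pow_mul_add_inv_pow (Nat.lt_succ_iff.mp (mem_range.mp hi))]]
  simp [mul_comm]

end IsPrimitiveRoot

namespace Polynomial.Chebyshev

variable {R : Type*} [CommRing R]

theorem natDegree_C_le : ∀ n : ℕ, (C R n).natDegree ≤ n
  | 0 => by simp [C_zero]
  | 1 => by simpa [C_one] using natDegree_X_le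
  | k + 2 => by
    have hC : C R ((k + 2 : ℕ) : ℤ) = X * C R ((k + 1 : ℕ) : ℤ) - C R k := by
      push_cast; exact C_add_two R k
    rw [hC]
    refine (natDegree_sub_le _ _).trans (max_le (natDegree_mul_le.trans ?_) ?_)
    · linarith [natDegree_X_le (R := R), natDegree_C_le (k + 1)]
    · linarith [natDegree_C_le k]

variable [Nontrivial R]

theorem monic_C_succ_and_natDegree (k : ℕ) :
    (C R (k + 1)).Monic ∧ (C R (k + 1)).natDegree = k + 1 := by
  induction k with
  | zero => simp [C_one]
  | succ k ih =>
    obtain ⟨hmon, hdeg⟩ := ih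
    have hlt : (C R k).natDegree < (X * C R (k + 1)).natDegree := by
      rw [natDegree_X_mul hmon.ne_zero, hdeg]
      exact Nat.lt_succ_of_lt (Nat.lt_succ_of_le (natDegree_C_le k))
    push_cast
    rw [add_assoc, one_add_one_eq_two, C_add_two]
    refine ⟨(monic_X.mul hmon).sub_of_left (degree_lt_degree hlt), ?_⟩
    rw [natDegree_sub_eq_left_of_natDegree_lt hlt, natDegree_X_mul hmon.ne_zero, hdeg]

theorem monic_C {n : ℕ} (hn : n ≠ 0) : (C R n).Monic := by
  obtain ⟨k, rfl⟩ := Nat.exists_eq_succ_of_ne_zero hn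
  exact_mod_cast (monic_C_succ_and_natDegree k).1

theorem natDegree_C {n : ℕ} (hn : n ≠ 0) : (C R n).natDegree = n := by
  obtain ⟨k, rfl⟩ := Nat.exists_eq_succ_of_ne_zero hn
  exact_mod_cast (monic_C_succ_and_natDegree (R := R) k).2

theorem norm_eval_C_add_inv_le {K : Type*} [NormedField K] {w : K} (hw : ‖w‖ = 1) (n : ℕ) :
    ‖(C K n).eval (w + w⁻¹)‖ ≤ 2 := by
  rw [← dickson_one_one_eq_chebyshev_C, dickson_one_one_eval_add_inv _ _
    (mul_inv_cancel₀ (norm_ne_zero_iff.mp (hw ▸ one_ne_zero)))]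
  calc ‖w ^ n + w⁻¹ ^ n‖ ≤ ‖w ^ n‖ + ‖w⁻¹ ^ n‖ := norm_add_le _ _
    _ = 2 := by rw [norm_pow, norm_pow, norm_inv, hw]; norm_num

end Polynomial.Chebyshev

namespace Complex

theorem exists_mem_Icc_ofReal_eq_add_inv {w : ℂ} (hw : ‖w‖ = 1) :
    ∃ x ∈ Set.Icc (-2 : ℝ) 2, (x : ℂ) = w + w⁻¹ := by
  refine ⟨2 * w.re, ?_, by rw [inv_eq_conj hw, add_conj]⟩
  have := abs_le.mp ((abs_re_le_norm w).trans hw.le)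
  constructor <;> linarith

theorem exists_norm_eq_one_add_inv_eq {x : ℝ} (hx : x ∈ Set.Icc (-2 : ℝ) 2) :
    ∃ w : ℂ, ‖w‖ = 1 ∧ w + w⁻¹ = x := by
  refine ⟨exp (Real.arccos (x / 2) * I), norm_exp_ofReal_mul_I _, ?_⟩
  rw [← exp_neg, ← neg_mul, ← two_cos, ← ofReal_cos,
    Real.cos_arccos (by linarith [hx.1]) (by linarith [hx.2])]
  push_cast
  ring

end Complex

section Estar

variable {m : ℕ}

theorem norm_le_two_of_mem_Estar (hm : m ≠ 0) {z : ℂ} (hz : z ∈ Estar m) : ‖z‖ ≤ 2 := by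
  obtain ⟨x, hx, hxz⟩ := hz
  have hpow : ‖z‖ ^ m ≤ 2 := by
    rw [← norm_pow, ← hxz, Complex.norm_real, Real.norm_eq_abs]
    exact abs_le.mpr hx
  by_contra! h
  linarith [le_self_pow₀ (by linarith : (1 : ℝ) ≤ ‖z‖) hm]

theorem norm_eval_le_iSup_Estar (hm : m ≠ 0) (P : ℂ[X]) {z : ℂ} (hz : z ∈ Estar m) :
    ‖P.eval z‖ ≤ ⨆ z ∈ Estar m, ‖P.eval z‖ := by
  obtain ⟨B, hB⟩ := (isCompact_closedBall (0 : ℂ) 2).exists_bound_of_continuousOn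
    (P.continuous.continuousOn (s := Metric.closedBall 0 2))
  refine le_ciSup₂ (f := fun z (_ : z ∈ Estar m) => ‖P.eval z‖) ⟨B, ?_⟩ z hz
  simp only [mem_upperBounds, Set.mem_iUnion, Set.mem_range]
  rintro _ ⟨w, hw, rfl⟩
  exact hB w (mem_closedBall_zero_iff.mpr (norm_le_two_of_mem_Estar hm hw))

theorem pow_mul_mem_Estar {ζ : ℂ} (hζ : ζ ^ m = 1) {z : ℂ} (hz : z ∈ Estar m) (k : ℕ) :
    ζ ^ k * z ∈ Estar m := by
  obtain ⟨x, hx, hxz⟩ := hz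
  exact ⟨x, hx, by rw [hxz, mul_pow, ← pow_mul, mul_comm k, pow_mul, hζ, one_pow, one_mul]⟩

theorem iSup_Estar_eval_C_comp_X_pow_le (n : ℕ) :
    ⨆ z ∈ Estar m, ‖((Chebyshev.C ℂ n).comp (X ^ m)).eval z‖ ≤ 2 := by
  refine Real.iSup_le (fun z => Real.iSup_le (fun hz => ?_) zero_le_two) zero_le_two
  obtain ⟨x, hx, hxz⟩ := hz
  obtain ⟨w, hw, hwx⟩ := Complex.exists_norm_eq_one_add_inv_eq hx
  rw [eval_comp, eval_pow, eval_X, ← hxz, ← hwx]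
  exact Chebyshev.norm_eval_C_add_inv_le hw n

theorem two_le_iSup_Estar {n : ℕ} (hm : m ≠ 0) (hn : n ≠ 0) {P : ℂ[X]} (hP : P.Monic)
    (hdeg : P.natDegree = m * n) : 2 ≤ ⨆ z ∈ Estar m, ‖P.eval z‖ := by
  set S := ⨆ z ∈ Estar m, ‖P.eval z‖
  obtain ⟨ζ, hζ⟩ : ∃ ζ : ℂ, IsPrimitiveRoot ζ m := ⟨_, Complex.isPrimitiveRoot_exp m hm⟩
  obtain ⟨ω, hω⟩ : ∃ ω : ℂ, IsPrimitiveRoot ω (2 * n) :=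
    ⟨_, Complex.isPrimitiveRoot_exp (2 * n) (by omega)⟩
  choose z hz using fun j : ℕ =>
    IsAlgClosed.exists_pow_nat_eq (ω ^ j + (ω ^ j)⁻¹) (Nat.pos_of_ne_zero hm)
  have hzE : ∀ j, z j ∈ Estar m := fun j => by
    obtain ⟨x, hx, hxw⟩ := Complex.exists_mem_Icc_ofReal_eq_add_inv
      (by rw [norm_pow, hω.norm'_eq_one (by omega), one_pow] : ‖ω ^ j‖ = 1)
    exact ⟨x, hx, by rw [hxw, hz]⟩
  have hQ : (contract m P).natDegree ≤ n := (natDegree_contract_le hm P).trans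
    (by rw [hdeg, Nat.mul_div_cancel_left _ (Nat.pos_of_ne_zero hm)])
  have hQn : (contract m P).coeff n = 1 := by
    rw [coeff_contract hm, mul_comm, ← hdeg]
    exact hP.coeff_natDegree
  have hsum : (4 * m * n : ℂ) =
      ∑ j ∈ range (2 * n), (-1) ^ j * ∑ k ∈ range m, P.eval (ζ ^ k * z j) := by
    simp_rw [hζ.sum_eval_mul_pow, hz, mul_left_comm _ (m : ℂ), ← mul_sum,
      hω.sum_neg_one_pow_mul_eval_add_inv hQ, hQn]
    ring
  have hbound : (4 * m * n : ℝ) ≤ 2 * n * (m * S) := by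
    calc (4 * m * n : ℝ) = ‖(4 * m * n : ℂ)‖ := by norm_cast
      _ ≤ ∑ j ∈ range (2 * n), ∑ k ∈ range m, ‖P.eval (ζ ^ k * z j)‖ := by
          rw [hsum]
          refine (norm_sum_le _ _).trans (sum_le_sum fun j _ => ?_)
          rw [norm_mul, norm_pow, norm_neg, norm_one, one_pow, one_mul]
          exact norm_sum_le _ _
      _ ≤ ∑ j ∈ range (2 * n), ∑ k ∈ range m, S := by
          gcongr with j _ k _
          exact norm_eval_le_iSup_Estar hm P (pow_mul_mem_Estar hζ.pow_eq_one (hzE j) k)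
      _ = 2 * n * (m * S) := by simp
  have hmn : (0 : ℝ) < m * n := by positivity
  nlinarith

end Estar

theorem chebNorm_Estar_mul_eq_two (m n : ℕ) (hm : 1 ≤ m) (hn : 1 ≤ n) :
    chebNorm (Estar m) (m * n) = 2 := by
  have hm₀ : m ≠ 0 := by omega
  have hn₀ : n ≠ 0 := by omega
  set T := (Chebyshev.C ℂ n).comp (X ^ m)
  have hT : T.Monic :=
    (Chebyshev.monic_C hn₀).comp (monic_X_pow m) (by rwa [natDegree_X_pow])
  have hTdeg : T.natDegree = m * n := by
    rw [natDegree_comp, Chebyshev.natDegree_C hn₀, natDegree_X_pow, mul_comm]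
  refine IsLeast.csInf_eq ⟨⟨T, hT, hTdeg, ?_⟩, ?_⟩
  · exact le_antisymm (two_le_iSup_Estar hm₀ hn₀ hT hTdeg) (iSup_Estar_eval_C_comp_X_pow_le n)
  · rintro r ⟨P, hP, hdeg, rfl⟩
    exact two_le_iSup_Estar hm₀ hn₀ hP hdeg
end

section
/- Let m ≥ 1 and let l be an integer with 1 ≤ l < 2m. Then the monomial z^l attains the l-th Chebyshev norm of E_m, and t_l(E_m) = 2^{l/m}; in particular t_{2m−1}(E_m) = 2^{2−1/m}, which tends to 4 as m → ∞. -/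
/-!
Let `ω` be a primitive `2m`-th root of unity and `η = 2^{1/m}`. The points `η ω^k` lie on `E_m`,
and for a monic `P` of degree `l < 2m` discrete orthogonality gives
`∑_{k < 2m} P(η ω^k) ω^{-lk} = 2m η^l`, so `|P(η ω^k)| ≥ η^l` for some `k`. Since `|z| ≤ η` on
`E_m`, the monomial `z^l` attains this bound.
-/

open Polynomial Filter Finset Topology

theorem geom_sum_eq_zero_of_pow_eq_one {R : Type*} [CommRing R] [IsDomain R] {x : R} {n : ℕ}
    (hx : x ≠ 1) (hxn : x ^ n = 1) : ∑ i ∈ range n, x ^ i = 0 :=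
  eq_zero_of_ne_zero_of_mul_left_eq_zero (sub_ne_zero_of_ne hx.symm) <| by
    rw [mul_neg_geom_sum, hxn, sub_self]

theorem IsPrimitiveRoot.sum_eval_mul_pow_mul_pow {R : Type*} [CommRing R] [IsDomain R] {ζ : R}
    {n : ℕ} (hζ : IsPrimitiveRoot ζ n) (c : R) {P : R[X]} (hP : P.natDegree < n) {j : ℕ}
    (hj : j < n) :
    ∑ k ∈ range n, P.eval (c * ζ ^ k) * (ζ ^ (n - j)) ^ k = n * P.coeff j * c ^ j := by
  have hcoeff (i : ℕ) (hi : i < n) : ∑ k ∈ range n, P.coeff i * c ^ i * (ζ ^ (i + (n - j))) ^ k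
      = if i = j then n * P.coeff j * c ^ j else 0 := by
    rw [← mul_sum]
    split_ifs with hij
    · subst hij
      rw [Nat.add_sub_cancel' hj.le, hζ.pow_eq_one]
      simp only [one_pow, sum_const, card_range, nsmul_eq_mul, mul_one]
      ring
    · -- `i + (n - j)` lies strictly between `0` and `2n` and differs from `n`
      rw [geom_sum_eq_zero_of_pow_eq_one, mul_zero]
      · rw [Ne, hζ.pow_eq_one_iff_dvd]
        intro hdvd
        have := Nat.eq_of_dvd_of_lt_two_mul (by omega) hdvd (by omega)
        omega
      · rw [← pow_mul, mul_comm, pow_mul, hζ.pow_eq_one, one_pow]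
  calc ∑ k ∈ range n, P.eval (c * ζ ^ k) * (ζ ^ (n - j)) ^ k
      = ∑ i ∈ range n, ∑ k ∈ range n, P.coeff i * c ^ i * (ζ ^ (i + (n - j))) ^ k := by
        simp_rw [eval_eq_sum_range' hP, sum_mul]
        rw [sum_comm]
        refine sum_congr rfl fun i _ => sum_congr rfl fun k _ => by ring
    _ = n * P.coeff j * c ^ j := by
        rw [sum_congr rfl fun i hi => hcoeff i (mem_range.mp hi), sum_ite_eq',
          if_pos (mem_range.mpr hj)]

theorem IsPrimitiveRoot.exists_pow_natDegree_le_norm_eval {ζ : ℂ} {n : ℕ}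
    (hζ : IsPrimitiveRoot ζ n) (c : ℂ) {P : ℂ[X]} (hP : P.Monic) (hn : P.natDegree < n) :
    ∃ k, ‖c‖ ^ P.natDegree ≤ ‖P.eval (c * ζ ^ k)‖ := by
  have hnorm : ‖ζ‖ = 1 := hζ.norm'_eq_one (by omega)
  have hsum : ∑ _k ∈ range n, ‖c‖ ^ P.natDegree ≤ ∑ k ∈ range n, ‖P.eval (c * ζ ^ k)‖ :=
    calc ∑ _k ∈ range n, ‖c‖ ^ P.natDegree
        = ‖∑ k ∈ range n, P.eval (c * ζ ^ k) * (ζ ^ (n - P.natDegree)) ^ k‖ := by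
          rw [hζ.sum_eval_mul_pow_mul_pow c hn hn, hP.coeff_natDegree]
          simp
      _ ≤ ∑ k ∈ range n, ‖P.eval (c * ζ ^ k)‖ :=
          (norm_sum_le _ _).trans_eq (by simp [hnorm])
  obtain ⟨k, -, hk⟩ := exists_le_of_sum_le (nonempty_range_iff.mpr (by omega)) hsum
  exact ⟨k, hk⟩

theorem le_biSup_of_bddAbove {α β : Type*} [ConditionallyCompleteLattice β] {f : α → β}
    {s : Set α} (hf : BddAbove (f '' s)) {a : α} (ha : a ∈ s) : f a ≤ ⨆ x ∈ s, f x :=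
  le_ciSup₂ (f := fun x (_ : x ∈ s) => f x)
    (hf.mono <| Set.iUnion_subset fun _ =>
      Set.range_subset_iff.mpr fun hx => Set.mem_image_of_mem f hx) a ha

theorem rpow_div_natCast_eq_pow (x : ℝ) (hx : 0 ≤ x) (l m : ℕ) :
    x ^ ((l : ℝ) / m) = (x ^ (m : ℝ)⁻¹) ^ l := by
  rw [← Real.rpow_mul_natCast hx, div_eq_inv_mul]

section Estar

variable {m : ℕ}

theorem norm_le_of_mem_Estar (hm : m ≠ 0) {z : ℂ} (hz : z ∈ Estar m) :
    ‖z‖ ≤ (2 : ℝ) ^ (m : ℝ)⁻¹ := by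
  obtain ⟨x, hx, hxz⟩ := hz
  have hzm : ‖z‖ ^ m ≤ ((2 : ℝ) ^ (m : ℝ)⁻¹) ^ m := by
    rw [Real.rpow_inv_natCast_pow zero_le_two hm, ← norm_pow, ← hxz, Complex.norm_real,
      Real.norm_eq_abs]
    exact abs_le.mpr hx
  exact (pow_le_pow_iff_left₀ (norm_nonneg z) (by positivity) hm).mp hzm

theorem bddAbove_norm_eval_Estar (hm : m ≠ 0) (P : ℂ[X]) :
    BddAbove ((fun z => ‖P.eval z‖) '' Estar m) :=
  ((isCompact_closedBall 0 _).bddAbove_image (by fun_prop)).mono <| Set.image_mono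
    fun _ hz => mem_closedBall_zero_iff.mpr (norm_le_of_mem_Estar hm hz)

theorem ofReal_rpow_inv_mem_Estar (hm : m ≠ 0) : (((2 : ℝ) ^ (m : ℝ)⁻¹ : ℝ) : ℂ) ∈ Estar m :=
  ⟨2, by norm_num, by rw [← Complex.ofReal_pow, Real.rpow_inv_natCast_pow zero_le_two hm]⟩

theorem mul_mem_Estar {z ω : ℂ} (hz : z ∈ Estar m) (hω : ω ^ m = -1) : z * ω ∈ Estar m := by
  obtain ⟨x, hx, hxz⟩ := hz
  refine ⟨-x, ⟨by linarith [hx.2], by linarith [hx.1]⟩, ?_⟩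
  rw [mul_pow, hω, ← hxz]
  push_cast
  ring

theorem mul_pow_mem_Estar {z ω : ℂ} (hz : z ∈ Estar m) (hω : ω ^ m = -1) (k : ℕ) :
    z * ω ^ k ∈ Estar m := by
  induction k with
  | zero => simpa using hz
  | succ k ih => simpa only [pow_succ, ← mul_assoc] using mul_mem_Estar ih hω

theorem iSup_norm_eval_X_pow_Estar (hm : m ≠ 0) (l : ℕ) :
    ⨆ z ∈ Estar m, ‖(X ^ l : ℂ[X]).eval z‖ = (2 : ℝ) ^ ((l : ℝ) / m) := by
  rw [rpow_div_natCast_eq_pow 2 zero_le_two]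
  have hbound : ∀ z ∈ Estar m, ‖(X ^ l : ℂ[X]).eval z‖ ≤ ((2 : ℝ) ^ (m : ℝ)⁻¹) ^ l := by
    intro z hz
    rw [eval_pow, eval_X, norm_pow]
    exact pow_le_pow_left₀ (norm_nonneg z) (norm_le_of_mem_Estar hm hz) l
  refine le_antisymm
    (Real.iSup_le (fun z => Real.iSup_le (hbound z) (by positivity)) (by positivity)) ?_
  calc ((2 : ℝ) ^ (m : ℝ)⁻¹) ^ l
      = ‖(X ^ l : ℂ[X]).eval (((2 : ℝ) ^ (m : ℝ)⁻¹ : ℝ) : ℂ)‖ := by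
        rw [eval_pow, eval_X, norm_pow, Complex.norm_of_nonneg (by positivity)]
    _ ≤ _ := le_biSup_of_bddAbove (bddAbove_norm_eval_Estar hm _) (ofReal_rpow_inv_mem_Estar hm)

theorem rpow_natDegree_div_le_iSup_norm_eval_Estar (hm : m ≠ 0) {P : ℂ[X]} (hP : P.Monic)
    (hdeg : P.natDegree < 2 * m) :
    (2 : ℝ) ^ ((P.natDegree : ℝ) / m) ≤ ⨆ z ∈ Estar m, ‖P.eval z‖ := by
  obtain ⟨ζ, hζ⟩ : ∃ ζ : ℂ, IsPrimitiveRoot ζ (2 * m) :=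
    ⟨_, Complex.isPrimitiveRoot_exp (2 * m) (by omega)⟩
  have hζm : ζ ^ m = -1 := by
    refine IsPrimitiveRoot.eq_neg_one_of_two_right ?_
    simpa [Nat.mul_div_cancel _ (Nat.pos_of_ne_zero hm)] using
      hζ.pow_of_dvd hm (dvd_mul_left m 2)
  obtain ⟨k, hk⟩ := hζ.exists_pow_natDegree_le_norm_eval _ hP hdeg
  calc (2 : ℝ) ^ ((P.natDegree : ℝ) / m)
      = ‖(((2 : ℝ) ^ (m : ℝ)⁻¹ : ℝ) : ℂ)‖ ^ P.natDegree := by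
        rw [Complex.norm_of_nonneg (by positivity), rpow_div_natCast_eq_pow 2 zero_le_two]
    _ ≤ _ := hk
    _ ≤ _ := le_biSup_of_bddAbove (bddAbove_norm_eval_Estar hm P)
        (mul_pow_mem_Estar (ofReal_rpow_inv_mem_Estar hm) hζm k)

theorem chebNorm_Estar (hm : m ≠ 0) {l : ℕ} (hl : l < 2 * m) :
    chebNorm (Estar m) l = (2 : ℝ) ^ ((l : ℝ) / m) := by
  refine IsLeast.csInf_eq ⟨⟨X ^ l, monic_X_pow l, natDegree_X_pow l,
    (iSup_norm_eval_X_pow_Estar hm l).symm⟩, ?_⟩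
  rintro _ ⟨P, hP, rfl, rfl⟩
  exact rpow_natDegree_div_le_iSup_norm_eval_Estar hm hP hl

end Estar

theorem chebNorm_Estar_low_degrees :
    (∀ m l : ℕ, 1 ≤ m → 1 ≤ l → l < 2 * m →
      (⨆ z ∈ Estar m, ‖(Polynomial.X ^ l : Polynomial ℂ).eval z‖)
          = chebNorm (Estar m) l ∧
        chebNorm (Estar m) l = (2 : ℝ) ^ ((l : ℝ) / (m : ℝ))) ∧
    (∀ m : ℕ, 1 ≤ m →
      chebNorm (Estar m) (2 * m - 1) = (2 : ℝ) ^ (2 - (1 : ℝ) / (m : ℝ))) ∧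
    Filter.Tendsto (fun m : ℕ => chebNorm (Estar m) (2 * m - 1)) Filter.atTop (nhds 4) := by
  have top_degree (m : ℕ) (hm : 1 ≤ m) :
      chebNorm (Estar m) (2 * m - 1) = (2 : ℝ) ^ (2 - (1 : ℝ) / m) := by
    rw [chebNorm_Estar (by omega) (by omega), Nat.cast_sub (by omega)]
    push_cast
    field_simp
  refine ⟨fun m l hm _ hl => ?_, top_degree, ?_⟩
  · rw [iSup_norm_eval_X_pow_Estar (by omega), chebNorm_Estar (by omega) hl]
    exact ⟨rfl, rfl⟩
  · have hlim : Tendsto (fun m : ℕ => (2 : ℝ) ^ (2 - (1 : ℝ) / m)) atTop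
        (𝓝 ((2 : ℝ) ^ (2 - 0 : ℝ))) :=
      (Real.continuousAt_const_rpow two_ne_zero).tendsto.comp
        (tendsto_const_nhds.sub tendsto_one_div_atTop_nhds_zero_nat)
    rw [sub_zero, Real.rpow_two, show (2 : ℝ) ^ 2 = 4 by norm_num] at hlim
    exact hlim.congr' (eventually_ge_atTop 1 |>.mono fun m hm => (top_degree m hm).symm)
end

section
/- (Achieser's norm formula) Let m ≥ 1, let a₁,…,a_{2m} be real numbers with |a_k| > 1 for every k, and define the weight w(x) = ∏_{k=1}^{2m} (1 − x/a_k)^{−1/2} for x ∈ [−1,1]. Then for every integer n > m, inf{ sup_{x ∈ [−1,1]} w(x)|P(x)| : P ∈ ℝ[X] monic of degree n } = 2^{1−n} · exp( (1/π) ∫_{−1}^{1} log w(x)/√(1 − x²) dx ). -/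
/-!
Write `2 aₖ rₖ = 1 + rₖ²` with `|rₖ| < 1`; then `1 - x / aₖ = (1 - 2 rₖ x + rₖ²) / (1 + rₖ²)`, so
`w (cos θ) = ∏ₖ √(1 + rₖ²) / |e^{iθ} - rₖ|`. Because `2m < 2n`, the real part of
`e^{i(n-2m)θ} ∏ₖ (e^{iθ} - rₖ)` is a cosine polynomial of degree `n`, i.e. `2^{n-1} P (cos θ)` for a
monic `P` of degree `n` (Achieser's polynomial), and
`w (cos θ) P (cos θ) = 2^{1-n} ∏ₖ √(1 + rₖ²) · cos ψ(θ)`, where the continuous phase `ψ` runs from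
`0` to `nπ` on `[0, π]`. Hence `w P` equioscillates `n + 1` times, which makes `P` extremal.
The logarithmic mean of `w` is `log ∏ₖ √(1 + rₖ²)` because `∫₀^π log |e^{iθ} - r| dθ = 0` for
`|r| < 1` (Jensen's formula on the unit circle).
-/

open Polynomial Real Set MeasureTheory
open Complex (I arg)
open scoped Complex

/-- The `n`-th weighted Chebyshev norm on `[-1,1]` for a weight `w`:
the infimum of `sup_{x ∈ [-1,1]} w(x) |P(x)|` over monic real polynomials `P`
of degree `n`. -/
noncomputable def wChebNorm (w : ℝ → ℝ) (n : ℕ) : ℝ :=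
  sInf { r : ℝ | ∃ P : Polynomial ℝ, P.Monic ∧ P.natDegree = n ∧
    r = ⨆ x ∈ Set.Icc (-1 : ℝ) 1, w x * |P.eval x| }

lemma exists_mem_Ioo_eq_zero_of_mul_neg {f : ℝ → ℝ} (hf : Continuous f) {a b : ℝ} (hab : a < b)
    (h : f a * f b < 0) : ∃ c ∈ Ioo a b, f c = 0 := by
  rcases mul_neg_iff.mp h with ⟨ha, hb⟩ | ⟨ha, hb⟩
  · exact intermediate_value_Ioo' hab.le hf.continuousOn ⟨hb, ha⟩
  · exact intermediate_value_Ioo hab.le hf.continuousOn ⟨ha, hb⟩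

theorem exists_strictMono_preimages {f : ℝ → ℝ} {a b : ℝ} (hab : a ≤ b)
    (hf : ContinuousOn f (Icc a b)) {ι : Type*} [LinearOrder ι] {y : ι → ℝ} (hy : StrictMono y)
    (hya : ∀ i, y i ∈ Icc (f a) (f b)) :
    ∃ t : ι → ℝ, StrictMono t ∧ ∀ i, t i ∈ Icc a b ∧ f (t i) = y i := by
  let A : ι → Set ℝ := fun i => Icc a b ∩ f ⁻¹' {y i}
  have hA : ∀ i, IsClosed (A i) := fun i =>
    hf.preimage_isClosed_of_isClosed isClosed_Icc isClosed_singleton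
  have hAbdd : ∀ i, BddBelow (A i) := fun i => bddBelow_Icc.mono inter_subset_left
  have hne : ∀ {c}, a ≤ c → c ≤ b → ∀ i, y i ∈ Icc (f a) (f c) → (A i ∩ Iic c).Nonempty := by
    intro c hac hcb i hi
    obtain ⟨s, hs, hfs⟩ := intermediate_value_Icc hac (hf.mono (Icc_subset_Icc_right hcb)) hi
    exact ⟨s, ⟨⟨hs.1, hs.2.trans hcb⟩, hfs⟩, hs.2⟩
  have hmem : ∀ i, sInf (A i) ∈ A i := fun i =>
    (hA i).csInf_mem ((hne hab le_rfl i (hya i)).mono inter_subset_left) (hAbdd i)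
  -- `t i` is the first time `f` hits `y i`; by the IVT on `[a, t j]` it comes before `t j`.
  refine ⟨fun i => sInf (A i), fun i j hij => lt_of_le_of_ne ?_ fun h => ?_, fun i => hmem i⟩
  · obtain ⟨s, hs, hsj⟩ := hne (hmem j).1.1 (hmem j).1.2 i
      ⟨(hya i).1, (hmem j).2.symm ▸ (hy hij).le⟩
    exact (csInf_le (hAbdd i) hs).trans hsj
  · have hfi : f (sInf (A i)) = y i := (hmem i).2
    rw [show sInf (A i) = sInf (A j) from h, (hmem j).2] at hfi
    exact (hy hij).ne' hfi

lemma le_biSup_of_continuousOn {g : ℝ → ℝ} {s : Set ℝ} (hs : IsCompact s)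
    (hg : ContinuousOn g s) {x : ℝ} (hx : x ∈ s) : g x ≤ ⨆ y ∈ s, g y := by
  refine le_ciSup₂ (f := fun y (_ : y ∈ s) => g y) ?_ x hx
  convert hs.bddAbove_image hg using 1
  ext
  simp [eq_comm]

lemma neg_one_pow_sq (k : ℕ) : ((-1 : ℝ) ^ k) ^ 2 = 1 := by
  rw [← pow_mul, mul_comm, pow_mul]
  norm_num

theorem Polynomial.le_degree_of_alternating {R : ℝ[X]} {n : ℕ} {x : Fin (n + 1) → ℝ}
    (hx : StrictAnti x) (hsign : ∀ k : Fin (n + 1), 0 < (-1) ^ (k : ℕ) * R.eval (x k)) :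
    n ≤ R.degree := by
  have hR : R ≠ 0 := by
    rintro rfl
    simpa using hsign 0
  have hroot : ∀ k : Fin n, ∃ ξ ∈ Ioo (x k.succ) (x k.castSucc), R.eval ξ = 0 := by
    intro k
    refine exists_mem_Ioo_eq_zero_of_mul_neg R.continuous (hx k.castSucc_lt_succ) ?_
    have hpos := mul_pos (hsign k.castSucc) (hsign k.succ)
    simp only [Fin.val_castSucc, Fin.val_succ, pow_succ] at hpos
    nlinarith [neg_one_pow_sq k]
  choose ξ hξ hξroot using hroot
  have hξ : StrictAnti ξ := fun i j hij =>
    calc ξ j < x j.castSucc := (hξ j).2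
      _ ≤ x i.succ := hx.antitone (Fin.succ_le_castSucc_iff.mpr hij)
      _ < ξ i := (hξ i).1
  rw [degree_eq_natDegree hR, Nat.cast_le]
  by_contra! hlt
  exact hR (R.eq_zero_of_natDegree_lt_card_of_eval_eq_zero hξ.injective hξroot (by simpa using hlt))

/-- The easy half of Chebyshev's alternation theorem. -/
theorem wChebNorm_eq_of_equioscillation {w : ℝ → ℝ} (hw : ContinuousOn w (Icc (-1) 1))
    (hw₀ : ∀ x ∈ Icc (-1 : ℝ) 1, 0 ≤ w x) {n : ℕ} {P : ℝ[X]} (hP : P.Monic)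
    (hPn : P.natDegree = n) {L : ℝ} (hbound : ∀ x ∈ Icc (-1 : ℝ) 1, w x * |P.eval x| ≤ L)
    {x : Fin (n + 1) → ℝ} (hx : StrictAnti x) (hxI : ∀ k, x k ∈ Icc (-1 : ℝ) 1)
    (halt : ∀ k : Fin (n + 1), w (x k) * P.eval (x k) = (-1) ^ (k : ℕ) * L) :
    wChebNorm w n = L := by
  have hle_sup : ∀ Q : ℝ[X], ∀ y ∈ Icc (-1 : ℝ) 1,
      w y * |Q.eval y| ≤ ⨆ z ∈ Icc (-1 : ℝ) 1, w z * |Q.eval z| := fun Q y hy =>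
    le_biSup_of_continuousOn isCompact_Icc (hw.mul Q.continuous.abs.continuousOn) hy
  have hL : L ≤ w (x 0) * |P.eval (x 0)| := by
    simpa [halt 0] using mul_le_mul_of_nonneg_left (le_abs_self (P.eval (x 0))) (hw₀ _ (hxI 0))
  refine IsLeast.csInf_eq ⟨⟨P, hP, hPn, le_antisymm ?_ ?_⟩, ?_⟩
  · exact hL.trans (hle_sup P _ (hxI 0))
  · refine Real.iSup_le (fun y => Real.iSup_le (fun hy => hbound y hy) ?_) ?_ <;>
      exact (mul_nonneg (hw₀ _ (hxI 0)) (abs_nonneg _)).trans (hbound _ (hxI 0))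
  rintro _ ⟨Q, hQ, hQn, rfl⟩
  by_contra! hlt
  have hsign : ∀ k : Fin (n + 1), 0 < (-1) ^ (k : ℕ) * (P - Q).eval (x k) := by
    intro k
    have hQk : |(-1) ^ (k : ℕ) * (w (x k) * Q.eval (x k))| < L := by
      rw [abs_mul, abs_neg_one_pow, one_mul, abs_mul, abs_of_nonneg (hw₀ _ (hxI k))]
      exact (hle_sup Q _ (hxI k)).trans_lt hlt
    have hPQ : w (x k) * ((-1) ^ (k : ℕ) * (P - Q).eval (x k))
        = L - (-1) ^ (k : ℕ) * (w (x k) * Q.eval (x k)) := by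
      rw [eval_sub]
      linear_combination (-1) ^ (k : ℕ) * halt k + L * neg_one_pow_sq k
    refine pos_of_mul_pos_right ?_ (hw₀ _ (hxI k))
    linarith [(abs_lt.mp hQk).2]
  have hdeg : (P - Q).degree < n := by
    rw [← hPn, ← degree_eq_natDegree hP.ne_zero]
    refine degree_sub_lt_left ?_ hP.ne_zero (by rw [hP.leadingCoeff, hQ.leadingCoeff])
    rw [degree_eq_natDegree hP.ne_zero, degree_eq_natDegree hQ.ne_zero, hPn, hQn]
  exact (Polynomial.le_degree_of_alternating hx hsign).not_gt hdeg

lemma re_exp_mul_I_zpow (θ : ℝ) (k : ℤ) : (cexp (θ * I) ^ k).re = cos (k * θ) := by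
  rw [← Complex.exp_int_mul, ← mul_assoc]
  exact_mod_cast Complex.exp_ofReal_mul_I_re (k * θ)

/-- `P = 2^{1-n} ∑ⱼ pⱼ T_{n-N+j}`, where `N = deg p`. -/
theorem exists_monic_eval_cos_eq_re {p : ℝ[X]} (hp : p.Monic) {n : ℕ}
    (hn : p.natDegree < 2 * n) :
    ∃ P : ℝ[X], P.Monic ∧ P.natDegree = n ∧ ∀ θ : ℝ, P.eval (cos θ) =
      (2 ^ (n - 1))⁻¹ * (cexp (θ * I) ^ ((n : ℤ) - p.natDegree) * aeval (cexp (θ * I)) p).re := by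
  set N := p.natDegree
  set S : ℝ[X] := ∑ j ∈ Finset.range N, C (p.coeff j) * Chebyshev.T ℝ ((n : ℤ) - N + j)
  have hS : S.natDegree < n := by
    refine (natDegree_sum_le_of_forall_le _ _ (n := n - 1) fun j hj => ?_).trans_lt (by omega)
    refine natDegree_C_mul_le _ _ |>.trans ?_
    rw [Chebyshev.natDegree_T]
    simp only [Finset.mem_range] at hj
    omega
  have hT : (Chebyshev.T ℝ n).natDegree = n := by simp
  have hdeg : (Chebyshev.T ℝ n + S).natDegree = n := by
    rw [natDegree_add_eq_left_of_natDegree_lt (hT.symm ▸ hS), hT]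
  have hlead : (Chebyshev.T ℝ n + S).leadingCoeff = 2 ^ (n - 1) := by
    rw [leadingCoeff_add_of_degree_lt' (degree_lt_degree (hT.symm ▸ hS)), Chebyshev.leadingCoeff_T]
    simp
  refine ⟨C (2 ^ (n - 1))⁻¹ * (Chebyshev.T ℝ n + S),
    monic_C_mul_of_mul_leadingCoeff_eq_one (by rw [hlead]; simp),
    by rw [natDegree_C_mul (by simp), hdeg], fun θ => ?_⟩
  have hsplit : Chebyshev.T ℝ n + S =
      ∑ j ∈ Finset.range (N + 1), C (p.coeff j) * Chebyshev.T ℝ ((n : ℤ) - N + j) := by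
    rw [Finset.sum_range_succ, add_comm, hp.coeff_natDegree]
    simp [S]
  rw [eval_mul, eval_C, hsplit, aeval_eq_sum_range, Finset.mul_sum, Complex.re_sum,
    eval_finsetSum]
  congr 1
  refine Finset.sum_congr rfl fun j _ => ?_
  rw [eval_mul, eval_C, Chebyshev.T_real_cos, Complex.real_smul, mul_left_comm,
    ← zpow_natCast, ← zpow_add₀ (Complex.exp_ne_zero _), Complex.re_ofReal_mul,
    re_exp_mul_I_zpow]

lemma re_exp_mul_I_mul_prod {ι : Type*} (s : Finset ι) (φ : ℝ) (u : ι → ℂ) :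
    (cexp (φ * I) * ∏ k ∈ s, u k).re = (∏ k ∈ s, ‖u k‖) * cos (φ + ∑ k ∈ s, arg (u k)) := by
  have hu : ∏ k ∈ s, u k = ∏ k ∈ s, ((‖u k‖ : ℂ) * cexp (arg (u k) * I)) := by
    simp_rw [Complex.norm_mul_exp_arg_mul_I]
  rw [hu, Finset.prod_mul_distrib, ← Complex.exp_sum, mul_left_comm, ← Complex.exp_add,
    ← Finset.sum_mul, ← add_mul, ← Complex.ofReal_prod, ← Complex.ofReal_sum, ← Complex.ofReal_add,
    Complex.re_ofReal_mul, Complex.exp_ofReal_mul_I_re]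

lemma exp_mul_I_sub_ofReal (θ r : ℝ) :
    cexp (θ * I) - r = cexp (θ * I) * (1 - r * cexp (-(θ * I))) := by
  rw [mul_sub, mul_one, mul_left_comm, ← Complex.exp_add, add_neg_cancel, Complex.exp_zero, mul_one]

lemma norm_exp_mul_I_sub_ofReal_sq (θ r : ℝ) :
    ‖cexp (θ * I) - r‖ ^ 2 = 1 - 2 * r * cos θ + r ^ 2 := by
  rw [Complex.sq_norm, Complex.normSq_apply]
  simp only [Complex.sub_re, Complex.sub_im, Complex.exp_ofReal_mul_I_re,
    Complex.exp_ofReal_mul_I_im, Complex.ofReal_re, Complex.ofReal_im]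
  linear_combination sin_sq_add_cos_sq θ

lemma exp_mul_I_ne_ofReal {r : ℝ} (hr : |r| < 1) (θ : ℝ) : cexp (θ * I) ≠ r := by
  intro h
  have := congrArg norm h
  rw [Complex.norm_exp_ofReal_mul_I, Complex.norm_real, Real.norm_eq_abs] at this
  linarith

lemma mul_le_abs_of_abs_le_one {x : ℝ} (hx : |x| ≤ 1) (r : ℝ) : r * x ≤ |r| :=
  calc r * x ≤ |r| * |x| := (le_abs_self _).trans (abs_mul r x).le
    _ ≤ |r| := mul_le_of_le_one_right (abs_nonneg r) hx

lemma one_sub_two_mul_mul_add_sq_div_pos {r x : ℝ} (hr : |r| < 1) (hx : x ∈ Icc (-1 : ℝ) 1) :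
    0 < (1 - 2 * r * x + r ^ 2) / (1 + r ^ 2) :=
  div_pos (by nlinarith [mul_le_abs_of_abs_le_one (abs_le.mpr hx) r, sq_abs r, abs_nonneg r])
    (by positivity)

lemma one_sub_mul_exp_neg_mul_I_mem_slitPlane {r : ℝ} (hr : |r| < 1) (θ : ℝ) :
    1 - r * cexp (-(θ * I)) ∈ Complex.slitPlane := by
  refine Complex.mem_slitPlane_iff.mpr (Or.inl ?_)
  rw [← neg_mul, ← Complex.ofReal_neg]
  simp only [Complex.sub_re, Complex.one_re, Complex.re_ofReal_mul, Complex.exp_ofReal_mul_I_re,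
    cos_neg]
  linarith [mul_le_abs_of_abs_le_one (abs_cos_le_one θ) r]

lemma image_cos_Ioo_zero_pi : cos '' Ioo 0 π = Ioo (-1) 1 := by
  ext y
  constructor
  · rintro ⟨θ, hθ, rfl⟩
    have hθ' := Ioo_subset_Icc_self hθ
    exact ⟨by simpa using strictAntiOn_cos hθ' (right_mem_Icc.2 pi_pos.le) hθ.2,
      by simpa using strictAntiOn_cos (left_mem_Icc.2 pi_pos.le) hθ' hθ.1⟩
  · exact fun hy => ⟨arccos y, ⟨arccos_pos.2 hy.2, arccos_lt_pi.2 hy.1⟩, cos_arccos hy.1.le hy.2.le⟩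

theorem integral_div_sqrt_one_sub_sq (f : ℝ → ℝ) :
    ∫ x in (-1)..1, f x / √(1 - x ^ 2) = ∫ θ in 0..π, f (cos θ) := by
  have hcov := integral_image_eq_integral_abs_deriv_smul measurableSet_Ioo
    (fun θ _ => (hasDerivAt_cos θ).hasDerivWithinAt) (injOn_cos.mono Ioo_subset_Icc_self)
    (fun x => f x / √(1 - x ^ 2))
  rw [image_cos_Ioo_zero_pi] at hcov
  rw [intervalIntegral.integral_of_le (by norm_num), integral_Ioc_eq_integral_Ioo, hcov,
    intervalIntegral.integral_of_le pi_pos.le, integral_Ioc_eq_integral_Ioo]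
  refine setIntegral_congr_fun measurableSet_Ioo fun θ hθ => ?_
  have hsin := sin_pos_of_pos_of_lt_pi hθ.1 hθ.2
  rw [smul_eq_mul, abs_neg, abs_of_pos hsin, ← sin_sq, sqrt_sq hsin.le]
  field_simp

lemma continuous_log_norm_exp_mul_I_sub_ofReal {r : ℝ} (hr : |r| < 1) :
    Continuous fun θ : ℝ => log ‖cexp (θ * I) - r‖ :=
  (by fun_prop : Continuous fun θ : ℝ => ‖cexp (θ * I) - r‖).log fun θ =>
    norm_ne_zero_iff.mpr (sub_ne_zero.mpr (exp_mul_I_ne_ofReal hr θ))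

theorem integral_log_norm_exp_mul_I_sub_ofReal {r : ℝ} (hr : |r| < 1) :
    ∫ θ in 0..π, log ‖cexp (θ * I) - r‖ = 0 := by
  set g : ℝ → ℝ := fun θ => log ‖cexp (θ * I) - r‖
  have hg := continuous_log_norm_exp_mul_I_sub_ofReal hr
  have hg_cos : ∀ θ, g θ = log (1 - 2 * r * cos θ + r ^ 2) / 2 := fun θ => by
    rw [← norm_exp_mul_I_sub_ofReal_sq, log_pow]
    ring
  have hsymm : ∀ θ, g (2 * π - θ) = g θ := fun θ => by rw [hg_cos, hg_cos, cos_two_pi_sub]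
  -- Over the full period this is the mean of `log ‖z - r‖` on the unit circle, zero by Jensen.
  have hcircle : ∫ θ in 0..2 * π, g θ = 0 := by
    have := circleAverage_log_norm_sub_const₀ (a := (r : ℂ)) (by simpa using hr)
    simpa [circleAverage_def, circleMap, g, pi_ne_zero] using this
  have hhalf : ∫ θ in π..2 * π, g θ = ∫ θ in 0..π, g θ := by
    have := intervalIntegral.integral_comp_sub_left g (2 * π) (a := 0) (b := π)
    simp only [hsymm, sub_zero, show 2 * π - π = π by ring] at this
    exact this.symm
  rw [← intervalIntegral.integral_add_adjacent_intervals (hg.intervalIntegrable 0 π)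
    (hg.intervalIntegrable π (2 * π)), hhalf] at hcircle
  linarith

lemma rpow_neg_one_half_sq_div_mul {t s : ℝ} (ht : 0 < t) (hs : 0 < s) :
    (t ^ 2 / s) ^ (-(1 : ℝ) / 2) * t = √s := by
  rw [neg_div, rpow_neg (by positivity), ← sqrt_eq_rpow, sqrt_div (sq_nonneg t), sqrt_sq ht.le]
  field_simp

section Achieser

variable {ι : Type*} [Fintype ι]

/-- Each factor is `1 - x / a` when `2 a r = 1 + r²`. -/
noncomputable def achieserWeight (r : ι → ℝ) (x : ℝ) : ℝ :=
  ∏ k, ((1 - 2 * r k * x + r k ^ 2) / (1 + r k ^ 2)) ^ (-(1 : ℝ) / 2)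

/-- A continuous branch of the argument of `e^{inθ} ∏ₖ (1 - rₖ e^{-iθ})`. -/
noncomputable def achieserPhase (n : ℕ) (r : ι → ℝ) (θ : ℝ) : ℝ :=
  n * θ + ∑ k, arg (1 - r k * cexp (-(θ * I)))

theorem re_zpow_mul_aeval_prod_X_sub_C (n : ℕ) (r : ι → ℝ) (θ : ℝ) :
    (cexp (θ * I) ^ ((n : ℤ) - Fintype.card ι) * aeval (cexp (θ * I)) (∏ k, (X - C (r k)))).re =
      (∏ k, ‖cexp (θ * I) - r k‖) * cos (achieserPhase n r θ) := by
  have hzn : cexp (θ * I) ^ ((n : ℤ) - Fintype.card ι) * cexp (θ * I) ^ Fintype.card ι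
      = cexp ((n * θ : ℝ) * I) := by
    rw [← zpow_natCast, ← zpow_add₀ (Complex.exp_ne_zero _), sub_add_cancel, ← Complex.exp_int_mul]
    push_cast
    ring_nf
  simp only [map_prod, map_sub, aeval_X, aeval_C, Complex.coe_algebraMap, exp_mul_I_sub_ofReal,
    Finset.prod_mul_distrib, Finset.prod_const, Finset.card_univ, ← mul_assoc, hzn, norm_mul,
    Complex.norm_exp_ofReal_mul_I, one_mul]
  rw [re_exp_mul_I_mul_prod, achieserPhase]

variable {r : ι → ℝ}

lemma achieserWeight_cos_mul_prod_norm (hr : ∀ k, |r k| < 1) (θ : ℝ) :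
    achieserWeight r (cos θ) * ∏ k, ‖cexp (θ * I) - r k‖ = ∏ k, √(1 + r k ^ 2) := by
  rw [achieserWeight, ← Finset.prod_mul_distrib]
  refine Finset.prod_congr rfl fun k _ => ?_
  rw [← norm_exp_mul_I_sub_ofReal_sq θ (r k)]
  exact rpow_neg_one_half_sq_div_mul
    (norm_pos_iff.mpr (sub_ne_zero.mpr (exp_mul_I_ne_ofReal (hr k) θ))) (by positivity)

lemma achieserWeight_nonneg (hr : ∀ k, |r k| < 1) {x : ℝ} (hx : x ∈ Icc (-1 : ℝ) 1) :
    0 ≤ achieserWeight r x :=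
  Finset.prod_nonneg fun k _ => rpow_nonneg (one_sub_two_mul_mul_add_sq_div_pos (hr k) hx).le _

lemma continuousOn_achieserWeight (hr : ∀ k, |r k| < 1) :
    ContinuousOn (achieserWeight r) (Icc (-1) 1) :=
  continuousOn_finsetProd _ fun k _ => ContinuousOn.rpow_const (by fun_prop)
    fun _ hx => Or.inl (one_sub_two_mul_mul_add_sq_div_pos (hr k) hx).ne'

lemma continuous_achieserPhase (n : ℕ) (hr : ∀ k, |r k| < 1) : Continuous (achieserPhase n r) :=
  (continuous_const.mul continuous_id).add <| continuous_finsetSum _ fun k _ =>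
    Complex.continuousOn_arg.comp_continuous (by fun_prop)
      (one_sub_mul_exp_neg_mul_I_mem_slitPlane (hr k))

lemma achieserPhase_zero (n : ℕ) (hr : ∀ k, |r k| < 1) : achieserPhase n r 0 = 0 := by
  simp only [achieserPhase, Complex.ofReal_zero, zero_mul, neg_zero, Complex.exp_zero, mul_one,
    mul_zero, zero_add]
  refine Finset.sum_eq_zero fun k _ => ?_
  rw [← Complex.ofReal_one, ← Complex.ofReal_sub, Complex.arg_ofReal_of_nonneg]
  linarith [(abs_lt.mp (hr k)).2]

lemma achieserPhase_pi (n : ℕ) (hr : ∀ k, |r k| < 1) : achieserPhase n r π = n * π := by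
  simp only [achieserPhase, Complex.exp_neg, Complex.exp_pi_mul_I, inv_neg, inv_one, mul_neg_one,
    sub_neg_eq_add, add_eq_left]
  refine Finset.sum_eq_zero fun k _ => ?_
  rw [← Complex.ofReal_one, ← Complex.ofReal_add, Complex.arg_ofReal_of_nonneg]
  linarith [(abs_lt.mp (hr k)).1]

theorem exists_monic_achieserWeight_mul_eval_cos {n : ℕ} (hr : ∀ k, |r k| < 1)
    (hn : Fintype.card ι < 2 * n) :
    ∃ P : ℝ[X], P.Monic ∧ P.natDegree = n ∧ ∀ θ, achieserWeight r (cos θ) * P.eval (cos θ) =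
      (2 ^ (n - 1))⁻¹ * (∏ k, √(1 + r k ^ 2)) * cos (achieserPhase n r θ) := by
  have hdeg : (∏ k, (X - C (r k))).natDegree = Fintype.card ι := by
    simp [natDegree_finsetProd_X_sub_C_eq_card]
  obtain ⟨P, hP, hPn, hPθ⟩ := exists_monic_eval_cos_eq_re (monic_prod_X_sub_C r Finset.univ)
    (hdeg.symm ▸ hn)
  refine ⟨P, hP, hPn, fun θ => ?_⟩
  rw [hPθ, hdeg, re_zpow_mul_aeval_prod_X_sub_C, ← achieserWeight_cos_mul_prod_norm hr θ]
  ring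

theorem wChebNorm_achieserWeight {n : ℕ} (hr : ∀ k, |r k| < 1) (hn : Fintype.card ι < 2 * n) :
    wChebNorm (achieserWeight r) n = (2 ^ (n - 1))⁻¹ * ∏ k, √(1 + r k ^ 2) := by
  set L := (2 ^ (n - 1) : ℝ)⁻¹ * ∏ k, √(1 + r k ^ 2)
  have hL : 0 ≤ L := by positivity
  obtain ⟨P, hP, hPn, hPθ⟩ := exists_monic_achieserWeight_mul_eval_cos hr hn
  obtain ⟨t, ht, htI⟩ := exists_strictMono_preimages pi_pos.le
    (continuous_achieserPhase n hr).continuousOn (y := fun k : Fin (n + 1) => (k : ℝ) * π)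
    (fun i j hij => mul_lt_mul_of_pos_right (by exact_mod_cast hij) pi_pos) fun k => by
      rw [achieserPhase_zero n hr, achieserPhase_pi n hr]
      exact ⟨by positivity, by gcongr; exact_mod_cast k.is_le⟩
  refine wChebNorm_eq_of_equioscillation (continuousOn_achieserWeight hr)
    (fun x hx => achieserWeight_nonneg hr hx) hP hPn (fun x hx => ?_) (x := fun k => cos (t k))
    (fun i j hij => strictAntiOn_cos (htI i).1 (htI j).1 (ht hij))
    (fun k => ⟨neg_one_le_cos _, cos_le_one _⟩) (fun k => ?_)
  · have hθ := hPθ (arccos x)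
    rw [cos_arccos hx.1 hx.2] at hθ
    calc achieserWeight r x * |P.eval x| = |achieserWeight r x * P.eval x| := by
          rw [abs_mul, abs_of_nonneg (achieserWeight_nonneg hr hx)]
      _ = L * |cos (achieserPhase n r (arccos x))| := by rw [hθ, abs_mul, abs_of_nonneg hL]
      _ ≤ L := mul_le_of_le_one_right hL (abs_cos_le_one _)
  · rw [hPθ, (htI k).2, cos_nat_mul_pi, mul_comm]

theorem integral_log_achieserWeight_div_sqrt (hr : ∀ k, |r k| < 1) :
    ∫ x in (-1)..1, log (achieserWeight r x) / √(1 - x ^ 2) = π * log (∏ k, √(1 + r k ^ 2)) := by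
  have hlog : ∀ θ, log (achieserWeight r (cos θ)) =
      log (∏ k, √(1 + r k ^ 2)) - ∑ k, log ‖cexp (θ * I) - r k‖ := fun θ => by
    have hnorm : ∀ k, ‖cexp (θ * I) - r k‖ ≠ 0 := fun k =>
      norm_ne_zero_iff.mpr (sub_ne_zero.mpr (exp_mul_I_ne_ofReal (hr k) θ))
    rw [← achieserWeight_cos_mul_prod_norm hr θ, log_mul, log_prod fun k _ => hnorm k]
    · ring
    · exact left_ne_zero_of_mul (by rw [achieserWeight_cos_mul_prod_norm hr θ]; positivity)
    · exact Finset.prod_ne_zero_iff.mpr fun k _ => hnorm k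
  rw [integral_div_sqrt_one_sub_sq, intervalIntegral.integral_congr fun θ _ => hlog θ,
    intervalIntegral.integral_sub intervalIntegrable_const
      ((continuous_finsetSum _ fun k _ =>
        continuous_log_norm_exp_mul_I_sub_ofReal (hr k)).intervalIntegrable _ _),
    intervalIntegral.integral_finsetSum fun k _ =>
      (continuous_log_norm_exp_mul_I_sub_ofReal (hr k)).intervalIntegrable _ _]
  simp [integral_log_norm_exp_mul_I_sub_ofReal (hr _)]

end Achieser

lemma exists_two_mul_mul_eq_one_add_sq_of_one_lt {a : ℝ} (ha : 1 < a) :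
    ∃ r, 0 < r ∧ r < 1 ∧ 2 * a * r = 1 + r ^ 2 := by
  have hs : √(a ^ 2 - 1) ^ 2 = a ^ 2 - 1 := sq_sqrt (by nlinarith)
  refine ⟨a - √(a ^ 2 - 1), ?_, ?_, by linear_combination -hs⟩ <;>
    nlinarith [sqrt_nonneg (a ^ 2 - 1)]

lemma exists_abs_lt_one_two_mul_mul_eq {a : ℝ} (ha : 1 < |a|) :
    ∃ r, |r| < 1 ∧ 2 * a * r = 1 + r ^ 2 := by
  rcases lt_abs.mp ha with ha | ha
  · obtain ⟨r, hr₀, hr₁, hr⟩ := exists_two_mul_mul_eq_one_add_sq_of_one_lt ha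
    exact ⟨r, abs_lt.mpr ⟨by linarith, hr₁⟩, hr⟩
  · obtain ⟨r, hr₀, hr₁, hr⟩ := exists_two_mul_mul_eq_one_add_sq_of_one_lt ha
    exact ⟨-r, by rw [abs_neg]; exact abs_lt.mpr ⟨by linarith, hr₁⟩, by linear_combination hr⟩

lemma one_sub_div_eq_of_two_mul_mul_eq {a r : ℝ} (h : 2 * a * r = 1 + r ^ 2) (x : ℝ) :
    1 - x / a = (1 - 2 * r * x + r ^ 2) / (1 + r ^ 2) := by
  have ha : a ≠ 0 := by rintro rfl; nlinarith
  field_simp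
  linear_combination x * h

theorem achieser_norm_formula_general (m : ℕ)
    (a : Fin (2 * m) → ℝ) (ha : ∀ k, 1 < |a k|)
    (w : ℝ → ℝ) (hw : ∀ x, w x = ∏ k, (1 - x / a k) ^ (-(1 : ℝ) / 2))
    (n : ℕ) (hn : m < n) :
    wChebNorm w n = (2 : ℝ) ^ (1 - (n : ℝ)) *
      Real.exp ((1 / Real.pi) *
        ∫ x in (-1 : ℝ)..1, Real.log (w x) / Real.sqrt (1 - x ^ 2)) := by
  choose r hr hra using fun k => exists_abs_lt_one_two_mul_mul_eq (ha k)
  have hw' : w = achieserWeight r := funext fun x => by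
    simp only [hw, achieserWeight, one_sub_div_eq_of_two_mul_mul_eq (hra _)]
  have h2 : (2 : ℝ) ^ (1 - (n : ℝ)) = (2 ^ (n - 1))⁻¹ := by
    rw [← rpow_natCast, ← rpow_neg zero_le_two, Nat.cast_sub (by omega)]
    push_cast
    ring_nf
  rw [hw', wChebNorm_achieserWeight hr (by simpa using hn), integral_log_achieserWeight_div_sqrt hr,
    one_div, inv_mul_cancel_left₀ pi_ne_zero, exp_log (by positivity), h2]

/-- Achieser's explicit formula for the weighted Chebyshev norm with weight
`w(x) = ∏_{k=1}^{2m} (1 - x/a_k)^{-1/2}`, `|a_k| > 1`. -/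
theorem achieser_norm_formula (m : ℕ) (hm : 1 ≤ m)
    (a : Fin (2 * m) → ℝ) (ha : ∀ k, 1 < |a k|)
    (w : ℝ → ℝ) (hw : ∀ x, w x = ∏ k, (1 - x / a k) ^ (-(1 : ℝ) / 2))
    (n : ℕ) (hn : m < n) :
    wChebNorm w n = (2 : ℝ) ^ (1 - (n : ℝ)) *
      Real.exp ((1 / Real.pi) *
        ∫ x in (-1 : ℝ)..1, Real.log (w x) / Real.sqrt (1 - x ^ 2)) :=
  achieser_norm_formula_general m a ha w hw n hn
end

section
/- For every z ∈ ℂ and every w ∈ ℂ with w² = z² − 1, one has (1/π) ∫_{−1}^{1} log|x − z| / √(1 − x²) dx = log( max(|z + w|, |z − w|) / 2 ). In particular, for z in the real interval [−1,1] the integral is constantly equal to −log 2. -/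
/-!
Substituting `x = cos θ` turns the integral into `π⁻¹ ∫₀^π log |cos θ - z| dθ`, which by the
symmetry `θ ↦ 2π - θ` is the average of `ζ ↦ log |Re ζ - z|` over the unit circle.
With `α = z + w` and `β = z - w` one has `α β = 1` and `α + β = 2 z`, so on the unit circle, where
`ζ⁻¹ = conj ζ`, `2 ζ (Re ζ - z) = ζ² - 2 z ζ + 1 = (ζ - α) (ζ - β)`. The circle average of
`log |ζ - a|` is `log⁺ |a|` (Jensen), so the potential is `log⁺ |α| + log⁺ |β| - log 2`, and
`|α| |β| = 1` makes this `log (max |α| |β| / 2)`.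
-/

open MeasureTheory Real Complex Filter Metric

section

variable {E : Type*} [NormedAddCommGroup E] [NormedSpace ℝ E]

theorem integral_comp_cos_zero_two_pi {g : ℝ → E}
    (hg : IntervalIntegrable (fun θ ↦ g (Real.cos θ)) volume 0 (2 * π)) :
    ∫ θ in 0..2 * π, g (Real.cos θ) = (2 : ℝ) • ∫ θ in 0..π, g (Real.cos θ) := by
  have hπ := Real.pi_pos
  have h_upper : ∫ θ in π..2 * π, g (Real.cos θ) = ∫ θ in 0..π, g (Real.cos θ) := by
    have h := intervalIntegral.integral_comp_sub_left (fun θ ↦ g (Real.cos θ)) (2 * π)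
      (a := 0) (b := π)
    simp only [Real.cos_two_pi_sub, sub_zero] at h
    rw [h, show 2 * π - π = π by ring]
  have h_pi_mem : π ∈ Set.uIcc 0 (2 * π) := Set.mem_uIcc_of_le hπ.le (by linarith)
  rw [← intervalIntegral.integral_add_adjacent_intervals
      (hg.mono_set (Set.uIcc_subset_uIcc Set.left_mem_uIcc h_pi_mem))
      (hg.mono_set (Set.uIcc_subset_uIcc h_pi_mem Set.right_mem_uIcc)),
    h_upper, two_smul]

theorem circleAverage_comp_re {g : ℝ → E} (hg : CircleIntegrable (fun ζ ↦ g ζ.re) 0 1) :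
    circleAverage (fun ζ ↦ g ζ.re) 0 1 = π⁻¹ • ∫ θ in 0..π, g (Real.cos θ) := by
  have h_re (θ : ℝ) : (circleMap 0 1 θ).re = Real.cos θ := by
    simp [circleMap_zero, exp_ofReal_mul_I_re]
  simp only [CircleIntegrable, h_re] at hg
  rw [circleAverage_def]
  simp only [h_re]
  rw [integral_comp_cos_zero_two_pi hg, smul_smul]
  congr 1
  field_simp

end

theorem integral_div_sqrt_one_sub_sq_eq_integral_comp_cos (G : ℝ → ℝ) :
    ∫ x in (-1 : ℝ)..1, G x / √(1 - x ^ 2) = ∫ θ in 0..π, G (Real.cos θ) := by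
  have hπ := Real.pi_pos
  have h_image : Real.cos '' Set.Ioo 0 π = Set.Ioo (-1) 1 := by
    simpa using Real.continuous_cos.continuousOn.image_Ioo_of_strictAntiOn hπ.le
      Real.strictAntiOn_cos
  have h_subst := integral_image_eq_integral_abs_deriv_smul measurableSet_Ioo
    (fun θ _ ↦ (Real.hasDerivAt_cos θ).hasDerivWithinAt)
    (Real.injOn_cos.mono Set.Ioo_subset_Icc_self) (fun x ↦ G x / √(1 - x ^ 2))
  rw [h_image] at h_subst
  rw [intervalIntegral.integral_of_le (by norm_num), intervalIntegral.integral_of_le hπ.le,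
    integral_Ioc_eq_integral_Ioo, integral_Ioc_eq_integral_Ioo, h_subst]
  refine setIntegral_congr_fun measurableSet_Ioo fun θ hθ ↦ ?_
  have h_sin : 0 < Real.sin θ := Real.sin_pos_of_pos_of_lt_pi hθ.1 hθ.2
  rw [← Real.sin_sq, Real.sqrt_sq h_sin.le, abs_neg, abs_of_pos h_sin, smul_eq_mul]
  field_simp

theorem two_mul_norm_re_sub {z w ζ : ℂ} (hw : w ^ 2 = z ^ 2 - 1) (hζ : ‖ζ‖ = 1) :
    2 * ‖(ζ.re : ℂ) - z‖ = ‖ζ - (z + w)‖ * ‖ζ - (z - w)‖ := by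
  have h_conj : ζ * (starRingEnd ℂ) ζ = 1 := by
    rw [mul_conj, normSq_eq_norm_sq, hζ]; simp
  have h_re : (ζ.re : ℂ) = (ζ + (starRingEnd ℂ) ζ) / 2 := by
    rw [re_eq_add_conj]
  have : 2 * ζ * ((ζ.re : ℂ) - z) = (ζ - (z + w)) * (ζ - (z - w)) := by
    rw [h_re]; linear_combination h_conj + hw
  simpa [hζ] using congrArg norm this

theorem posLog_add_posLog_of_mul_eq_one {𝕜 : Type*} [NormedDivisionRing 𝕜] {α β : 𝕜}
    (h : α * β = 1) :
    log⁺ ‖α‖ + log⁺ ‖β‖ = Real.log (max ‖α‖ ‖β‖) := by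
  have h_norm : ‖α‖ * ‖β‖ = 1 := by rw [← norm_mul, h, norm_one]
  rw [posLog_eq_log_max_one (norm_nonneg α), posLog_eq_log_max_one (norm_nonneg β)]
  rcases le_total ‖α‖ ‖β‖ with hle | hle
  · have hα : ‖α‖ ≤ 1 := by nlinarith [norm_nonneg α]
    have hβ : 1 ≤ ‖β‖ := by nlinarith [norm_nonneg α]
    simp [hα, hβ, hle]
  · have hβ : ‖β‖ ≤ 1 := by nlinarith [norm_nonneg β]
    have hα : 1 ≤ ‖α‖ := by nlinarith [norm_nonneg β]
    simp [hα, hβ, hle]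

theorem log_norm_re_sub_eventuallyEq {z w : ℂ} (hw : w ^ 2 = z ^ 2 - 1) :
    (fun ζ : ℂ ↦ Real.log ‖(ζ.re : ℂ) - z‖) =ᶠ[codiscreteWithin (sphere 0 1)]
      fun ζ ↦ Real.log ‖ζ - (z + w)‖ + Real.log ‖ζ - (z - w)‖ - Real.log 2 := by
  filter_upwards [compl_finite_mem_codiscreteWithin (Set.toFinite {z + w, z - w}),
    self_mem_codiscreteWithin _] with ζ hζ hζ_sphere
  have hζ_norm : ‖ζ‖ = 1 := by simpa using hζ_sphere
  have hα : ‖ζ - (z + w)‖ ≠ 0 := by simp_all [sub_eq_zero]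
  have hβ : ‖ζ - (z - w)‖ ≠ 0 := by simp_all [sub_eq_zero]
  have h := two_mul_norm_re_sub hw hζ_norm
  rw [show ‖(ζ.re : ℂ) - z‖ = ‖ζ - (z + w)‖ * ‖ζ - (z - w)‖ / 2 by linarith,
    Real.log_div (mul_ne_zero hα hβ) two_ne_zero, Real.log_mul hα hβ]

theorem circleIntegrable_log_norm_re_sub (z : ℂ) :
    CircleIntegrable (fun ζ ↦ Real.log ‖(ζ.re : ℂ) - z‖) 0 1 := by
  obtain ⟨w, hw⟩ := IsAlgClosed.exists_pow_nat_eq (z ^ 2 - 1) two_pos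
  refine CircleIntegrable.congr_codiscreteWithin ?_ (by fun_prop : CircleIntegrable
    (fun ζ ↦ Real.log ‖ζ - (z + w)‖ + Real.log ‖ζ - (z - w)‖ - Real.log 2) 0 1)
  simpa using (log_norm_re_sub_eventuallyEq hw).symm

theorem circleAverage_log_norm_re_sub {z w : ℂ} (hw : w ^ 2 = z ^ 2 - 1) :
    circleAverage (fun ζ ↦ Real.log ‖(ζ.re : ℂ) - z‖) 0 1
      = log⁺ ‖z + w‖ + log⁺ ‖z - w‖ - Real.log 2 := by
  rw [circleAverage_congr_codiscreteWithin (by simpa using log_norm_re_sub_eventuallyEq hw)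
      one_ne_zero,
    circleAverage_fun_sub (by fun_prop) (circleIntegrable_const _ _ _),
    circleAverage_fun_add (circleIntegrable_log_norm_sub_const 1)
      (circleIntegrable_log_norm_sub_const 1),
    circleAverage_log_norm_sub_const_eq_posLog, circleAverage_log_norm_sub_const_eq_posLog,
    circleAverage_const]

theorem integral_log_norm_sub_div_sqrt {z w : ℂ} (hw : w ^ 2 = z ^ 2 - 1) :
    (1 / π) * ∫ x in (-1 : ℝ)..1, Real.log ‖(x : ℂ) - z‖ / √(1 - x ^ 2)
      = Real.log (max ‖z + w‖ ‖z - w‖ / 2) := by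
  have h_mul : (z + w) * (z - w) = 1 := by linear_combination -hw
  have h_max : max ‖z + w‖ ‖z - w‖ ≠ 0 :=
    (lt_max_of_lt_left (norm_pos_iff.2 (left_ne_zero_of_mul_eq_one h_mul))).ne'
  have h := circleAverage_comp_re (g := fun x ↦ Real.log ‖(x : ℂ) - z‖)
    (circleIntegrable_log_norm_re_sub z)
  rw [circleAverage_log_norm_re_sub hw, posLog_add_posLog_of_mul_eq_one h_mul] at h
  rw [integral_div_sqrt_one_sub_sq_eq_integral_comp_cos, one_div, ← smul_eq_mul, ← h,
    Real.log_div h_max two_ne_zero]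

theorem norm_add_mul_I_eq_one {x s : ℝ} (hs : s ^ 2 = 1 - x ^ 2) : ‖(x : ℂ) + s * I‖ = 1 := by
  rw [norm_add_mul_I, hs]; simp

/-- The logarithmic potential of the arcsine (equilibrium) measure of `[-1,1]`:
for every `z ∈ ℂ` and square root `w` of `z² - 1`,
`(1/π) ∫_{-1}^{1} log|x - z| / √(1-x²) dx = log( max(|z+w|, |z-w|) / 2 )`;
in particular the potential is constantly `-log 2` on `[-1,1]`. -/
theorem log_potential_arcsine :
    (∀ z w : ℂ, w ^ 2 = z ^ 2 - 1 →
      (1 / Real.pi) *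
          ∫ x in (-1 : ℝ)..1, Real.log ‖(x : ℂ) - z‖ / Real.sqrt (1 - x ^ 2)
        = Real.log (max ‖z + w‖ ‖z - w‖ / 2)) ∧
    (∀ z : ℝ, z ∈ Set.Icc (-1 : ℝ) 1 →
      (1 / Real.pi) *
          ∫ x in (-1 : ℝ)..1, Real.log |x - z| / Real.sqrt (1 - x ^ 2)
        = - Real.log 2) := by
  refine ⟨fun z w hw ↦ integral_log_norm_sub_div_sqrt hw, fun z hz ↦ ?_⟩
  have h_sq : (√(1 - z ^ 2)) ^ 2 = 1 - z ^ 2 := Real.sq_sqrt (by nlinarith [hz.1, hz.2])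
  have hw : ((√(1 - z ^ 2) : ℂ) * I) ^ 2 = (z : ℂ) ^ 2 - 1 := by
    rw [mul_pow, I_sq, ← ofReal_pow, h_sq]; push_cast; ring
  have h_plus := norm_add_mul_I_eq_one h_sq
  have h_minus := norm_add_mul_I_eq_one (x := z) (s := -√(1 - z ^ 2)) (by rw [neg_sq, h_sq])
  have h := integral_log_norm_sub_div_sqrt hw
  rw [ofReal_neg, neg_mul, ← sub_eq_add_neg] at h_minus
  simp only [← ofReal_sub, norm_real, Real.norm_eq_abs] at h
  rwa [h_plus, h_minus, max_self, Real.log_div one_ne_zero two_ne_zero, Real.log_one,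
    zero_sub] at h
end

section
/- For n ≥ 1 an integer and s > 0 a real number, set γ_n(s) := 2 Γ(2n+1) Γ(2n+2s) / ( (2n+s) Γ(2n+s)² ). If 0 < s < 1 then γ_{n+1}(s) > γ_n(s) for every n ≥ 1, and if s > 1 then γ_{n+1}(s) < γ_n(s) for every n ≥ 1. Equivalently, the ratio γ_{n+1}(s)/γ_n(s) = (2n+1)(2n+2)(2n+2s)(2n+2s+1) / ( (2n+s)(2n+s+1)²(2n+s+2) ) is > 1 for 0 < s < 1 and < 1 for s > 1. -/
/-!
Writing `x = n`, two applications of `Γ(a + 1) = a Γ(a)` to each Gamma factor give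
`γ(x + 1) = γ(x) · R(x)` with an explicit rational function `R`, and the numerator of `R - 1`
factors as `s (1 - s) (8x² + 8(s + 1)x + s² + 5s + 2)`. The last factor is positive for
`x ≥ 0`, `s > 0`, so the sign of `R - 1` is the sign of `1 - s`.
-/

open Real

lemma Real.Gamma_add_two {a : ℝ} (ha : a ≠ 0) (ha₁ : a + 1 ≠ 0) :
    Gamma (a + 2) = (a + 1) * a * Gamma a := by
  rw [show a + 2 = a + 1 + 1 by ring, Gamma_add_one ha₁, Gamma_add_one ha, mul_assoc]

namespace StarEquilibrium

/-- `γ_n(s)`, extended to real `x` in place of `n`. -/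
noncomputable def gamma (s x : ℝ) : ℝ :=
  2 * Gamma (2 * x + 1) * Gamma (2 * x + 2 * s) / ((2 * x + s) * Gamma (2 * x + s) ^ 2)

noncomputable def gammaRatio (s x : ℝ) : ℝ :=
  (2 * x + 1) * (2 * x + 2) * (2 * x + 2 * s) * (2 * x + 2 * s + 1) /
    ((2 * x + s) * (2 * x + s + 1) ^ 2 * (2 * x + s + 2))

variable {s x : ℝ}

lemma gamma_pos (hs : 0 < s) (hx : 0 ≤ x) : 0 < gamma s x := by
  have : 0 < Gamma (2 * x + 1) := Gamma_pos_of_pos (by linarith)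
  have : 0 < Gamma (2 * x + 2 * s) := Gamma_pos_of_pos (by linarith)
  have : 0 < Gamma (2 * x + s) := Gamma_pos_of_pos (by linarith)
  unfold gamma
  positivity

lemma gamma_add_one (hs : 0 < s) (hx : 0 ≤ x) :
    gamma s (x + 1) = gamma s x * gammaRatio s x := by
  have hΓ : 0 < Gamma (2 * x + s) := Gamma_pos_of_pos (by linarith)
  have shift : ∀ a : ℝ, 0 < a →
      Gamma (2 * (x + 1) + a) = (2 * x + a + 1) * (2 * x + a) * Gamma (2 * x + a) := by
    intro a ha
    rw [show 2 * (x + 1) + a = 2 * x + a + 2 by ring]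
    exact Gamma_add_two (by linarith) (by linarith)
  have : 0 < 2 * x + s := by linarith
  unfold gamma gammaRatio
  rw [shift 1 one_pos, shift (2 * s) (by linarith), shift s hs]
  field_simp
  ring

lemma gammaRatio_sub_one (h : 0 < 2 * x + s) :
    gammaRatio s x - 1 = s * (1 - s) * (8 * x ^ 2 + 8 * (s + 1) * x + s ^ 2 + 5 * s + 2) /
      ((2 * x + s) * (2 * x + s + 1) ^ 2 * (2 * x + s + 2)) := by
  unfold gammaRatio
  field_simp
  ring

lemma one_lt_gammaRatio (hs : 0 < s) (hs₁ : s < 1) (hx : 0 ≤ x) : 1 < gammaRatio s x := by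
  have h : 0 < 2 * x + s := by linarith
  have : 0 < 1 - s := by linarith
  refine sub_pos.mp ?_
  rw [gammaRatio_sub_one h]
  positivity

lemma gammaRatio_lt_one (hs₁ : 1 < s) (hx : 0 ≤ x) : gammaRatio s x < 1 := by
  have h : 0 < 2 * x + s := by linarith
  refine sub_neg.mp ?_
  rw [gammaRatio_sub_one h]
  refine div_neg_of_neg_of_pos (mul_neg_of_neg_of_pos ?_ (by positivity)) (by positivity)
  exact mul_neg_of_pos_of_neg (by linarith) (by linarith)

end StarEquilibrium

open StarEquilibrium in
theorem gamma_ratio_monotone (s : ℝ) (hs : 0 < s) (γ : ℕ → ℝ)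
    (hγ : ∀ n : ℕ, γ n =
      2 * Real.Gamma (2 * (n : ℝ) + 1) * Real.Gamma (2 * (n : ℝ) + 2 * s) /
        ((2 * (n : ℝ) + s) * Real.Gamma (2 * (n : ℝ) + s) ^ 2)) :
    (s < 1 → ∀ n : ℕ, 1 ≤ n → γ n < γ (n + 1)) ∧
    (1 < s → ∀ n : ℕ, 1 ≤ n → γ (n + 1) < γ n) ∧
    (∀ n : ℕ, 1 ≤ n → γ (n + 1) / γ n =
      (2 * (n : ℝ) + 1) * (2 * (n : ℝ) + 2) * (2 * (n : ℝ) + 2 * s) *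
          (2 * (n : ℝ) + 2 * s + 1) /
        ((2 * (n : ℝ) + s) * (2 * (n : ℝ) + s + 1) ^ 2 * (2 * (n : ℝ) + s + 2))) := by
  have hγ' (n : ℕ) : γ n = gamma s n := hγ n
  have pos (n : ℕ) : 0 < γ n := hγ' n ▸ gamma_pos hs n.cast_nonneg
  have succ (n : ℕ) : γ (n + 1) = γ n * gammaRatio s n := by
    rw [hγ', hγ', Nat.cast_succ, gamma_add_one hs n.cast_nonneg]
  refine ⟨fun hs₁ n _ => ?_, fun hs₁ n _ => ?_, fun n _ => ?_⟩
  · rw [succ]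
    exact lt_mul_of_one_lt_right (pos n) (one_lt_gammaRatio hs hs₁ n.cast_nonneg)
  · rw [succ]
    exact mul_lt_of_lt_one_right (pos n) (gammaRatio_lt_one hs₁ n.cast_nonneg)
  · rw [succ, mul_div_cancel_left₀ _ (pos n).ne']
    rfl
end

section
/- Let m, k, n ≥ 1 be integers. If P ∈ ℂ[X] is monic of degree n with sup_{z ∈ E_m} |P(z)| = t_n(E_m) (P is the Chebyshev polynomial of E_m of degree n), then the polynomial Q(z) := P(z^k) is monic of degree kn and satisfies sup_{z ∈ E_{mk}} |Q(z)| = t_{kn}(E_{mk}); in particular t_{kn}(E_{mk}) = t_n(E_m). -/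
open Polynomial Finset Bornology Set

section RootsOfUnity

variable {R : Type*} [CommRing R] [IsDomain R] {k : ℕ} {ζ : R}

theorem IsPrimitiveRoot.sum_range_pow_pow (hζ : IsPrimitiveRoot ζ k) (i : ℕ) :
    ∑ j ∈ range k, (ζ ^ i) ^ j = if k ∣ i then (k : R) else 0 := by
  split_ifs with hdvd
  · simp [(hζ.pow_eq_one_iff_dvd i).mpr hdvd]
  · have hne : ζ ^ i - 1 ≠ 0 := sub_ne_zero.mpr (mt (hζ.pow_eq_one_iff_dvd i).mp hdvd)
    refine (mul_eq_zero.mp ?_).resolve_right hne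
    rw [geom_sum_mul, ← pow_mul, mul_comm, pow_mul, hζ.pow_eq_one, one_pow, sub_self]

theorem IsPrimitiveRoot.sum_comp_C_pow_mul_X (hζ : IsPrimitiveRoot ζ k) (f : R[X]) :
    ∑ j ∈ range k, f.comp (C (ζ ^ j) * X) = C (k : R) * expand R k (contract k f) := by
  rcases k.eq_zero_or_pos with rfl | hk
  · simp
  ext i
  have hroots : ∑ j ∈ range k, (ζ ^ j) ^ i = if k ∣ i then (k : R) else 0 := by
    simp_rw [← pow_mul, mul_comm _ i, pow_mul, hζ.sum_range_pow_pow]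
  simp only [finsetSum_coeff, comp_C_mul_X_coeff, ← mul_sum, hroots, coeff_C_mul,
    coeff_expand hk]
  split_ifs with hdvd
  · rw [coeff_contract hk.ne', Nat.div_mul_cancel hdvd, mul_comm]
  · simp

theorem IsPrimitiveRoot.sum_eval_pow_mul (hζ : IsPrimitiveRoot ζ k) (f : R[X]) (z : R) :
    ∑ j ∈ range k, f.eval (ζ ^ j * z) = k * (contract k f).eval (z ^ k) := by
  simpa [eval_finsetSum, expand_eval] using congrArg (eval z) (hζ.sum_comp_C_pow_mul_X f)

end RootsOfUnity

theorem Polynomial.Monic.contract_of_natDegree_eq_mul {R : Type*} [CommSemiring R] [Nontrivial R]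
    {k n : ℕ} {f : R[X]} (hf : f.Monic) (hk : k ≠ 0) (hdeg : f.natDegree = k * n) :
    (Polynomial.contract k f).Monic ∧ (Polynomial.contract k f).natDegree = n := by
  have hlead : (Polynomial.contract k f).coeff n = 1 := by
    rw [coeff_contract hk, mul_comm, ← hdeg, hf.coeff_natDegree]
  have hle : (Polynomial.contract k f).natDegree ≤ n := by
    refine natDegree_le_iff_coeff_eq_zero.mpr fun i hi => ?_
    rw [coeff_contract hk]
    refine coeff_eq_zero_of_natDegree_lt ?_
    rw [hdeg, mul_comm i]
    exact Nat.mul_lt_mul_of_pos_left (by exact_mod_cast hi) (Nat.pos_of_ne_zero hk)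
  exact ⟨monic_of_natDegree_le_of_coeff_eq_one n hle hlead,
    le_antisymm hle (le_natDegree_of_ne_zero (by simp [hlead]))⟩

theorem Function.Surjective.biSup_preimage_comp {α β γ : Type*} [SupSet γ] {g : α → β}
    (hg : g.Surjective) (E : Set β) (f : β → γ) :
    ⨆ z ∈ g ⁻¹' E, f (g z) = ⨆ w ∈ E, f w :=
  hg.iSup_comp fun w => ⨆ _ : w ∈ E, f w

theorem Bornology.IsBounded.preimage_pow {𝕜 : Type*} [NormedDivisionRing 𝕜] {E : Set 𝕜}
    (hE : IsBounded E) {k : ℕ} (hk : k ≠ 0) : IsBounded ((· ^ k) ⁻¹' E) := by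
  obtain ⟨C, hC⟩ := isBounded_iff_forall_norm_le.mp hE
  refine isBounded_iff_forall_norm_le.mpr ⟨max 1 C, fun z hz => ?_⟩
  rcases le_total ‖z‖ 1 with hz1 | hz1
  · exact le_max_of_le_left hz1
  · calc ‖z‖ ≤ ‖z‖ ^ k := le_self_pow₀ hz1 hk
      _ = ‖z ^ k‖ := (norm_pow z k).symm
      _ ≤ max 1 C := le_max_of_le_right (hC _ hz)

namespace Polynomial

theorem biSup_norm_eval_nonneg (E : Set ℂ) (P : ℂ[X]) : 0 ≤ ⨆ z ∈ E, ‖P.eval z‖ :=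
  Real.iSup_nonneg fun _ => Real.iSup_nonneg fun _ => norm_nonneg _

theorem norm_eval_le_biSup {E : Set ℂ} (hE : IsBounded E) (P : ℂ[X]) {z : ℂ} (hz : z ∈ E) :
    ‖P.eval z‖ ≤ ⨆ w ∈ E, ‖P.eval w‖ := by
  have hbdd : BddAbove ((fun w => ‖P.eval w‖) '' E) :=
    (hE.isCompact_closure.bddAbove_image (by fun_prop : Continuous _).continuousOn).mono
      (image_mono subset_closure)
  refine le_ciSup₂ (f := fun w (_ : w ∈ E) => ‖P.eval w‖) (hbdd.mono ?_) z hz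
  exact iUnion_subset fun w => range_subset_iff.mpr (Set.mem_image_of_mem (‖P.eval ·‖))

theorem biSup_norm_eval_expand {k : ℕ} (hk : k ≠ 0) (E : Set ℂ) (P : ℂ[X]) :
    ⨆ z ∈ (· ^ k) ⁻¹' E, ‖(expand ℂ k P).eval z‖ = ⨆ w ∈ E, ‖P.eval w‖ := by
  simp_rw [expand_eval]
  exact Function.Surjective.biSup_preimage_comp
    (fun w => IsAlgClosed.exists_pow_nat_eq w (Nat.pos_of_ne_zero hk)) E fun w => ‖P.eval w‖

theorem biSup_norm_eval_contract_le {E : Set ℂ} (hE : IsBounded E) {k : ℕ} (hk : k ≠ 0) (f : ℂ[X]) :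
    ⨆ w ∈ E, ‖(contract k f).eval w‖ ≤ ⨆ z ∈ (· ^ k) ⁻¹' E, ‖f.eval z‖ := by
  set M := ⨆ z ∈ (· ^ k) ⁻¹' E, ‖f.eval z‖
  have hM : 0 ≤ M := biSup_norm_eval_nonneg _ f
  refine Real.iSup_le (fun w => Real.iSup_le (fun hw => ?_) hM) hM
  obtain ⟨z, rfl⟩ := IsAlgClosed.exists_pow_nat_eq w (Nat.pos_of_ne_zero hk)
  obtain ⟨ζ, hζ⟩ : ∃ ζ : ℂ, IsPrimitiveRoot ζ k := ⟨_, Complex.isPrimitiveRoot_exp k hk⟩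
  have hrot : ∀ j, ‖f.eval (ζ ^ j * z)‖ ≤ M := by
    refine fun j => norm_eval_le_biSup (hE.preimage_pow hk) f ?_
    rwa [Set.mem_preimage, mul_pow, ← pow_mul, mul_comm j, pow_mul, hζ.pow_eq_one, one_pow, one_mul]
  have hk_pos : (0 : ℝ) < k := Nat.cast_pos.mpr (Nat.pos_of_ne_zero hk)
  refine le_of_mul_le_mul_left ?_ hk_pos
  calc (k : ℝ) * ‖(contract k f).eval (z ^ k)‖
      = ‖∑ j ∈ range k, f.eval (ζ ^ j * z)‖ := by
        rw [hζ.sum_eval_pow_mul, norm_mul, Complex.norm_natCast]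
    _ ≤ ∑ j ∈ range k, ‖f.eval (ζ ^ j * z)‖ := norm_sum_le _ _
    _ ≤ k * M := (Finset.sum_le_sum fun j _ => hrot j).trans_eq (by simp)

end Polynomial

theorem chebNorm_le_biSup_norm_eval {E : Set ℂ} {n : ℕ} {P : ℂ[X]} (hP : P.Monic)
    (hdeg : P.natDegree = n) : chebNorm E n ≤ ⨆ z ∈ E, ‖P.eval z‖ :=
  csInf_le ⟨0, by rintro _ ⟨Q, -, -, rfl⟩; exact Polynomial.biSup_norm_eval_nonneg E Q⟩
    ⟨P, hP, hdeg, rfl⟩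

theorem le_chebNorm {E : Set ℂ} {n : ℕ} {r : ℝ}
    (h : ∀ P : ℂ[X], P.Monic → P.natDegree = n → r ≤ ⨆ z ∈ E, ‖P.eval z‖) :
    r ≤ chebNorm E n :=
  le_csInf ⟨_, X ^ n, monic_X_pow n, natDegree_X_pow n, rfl⟩
    (by rintro _ ⟨P, hP, hdeg, rfl⟩; exact h P hP hdeg)

theorem chebNorm_preimage_pow {E : Set ℂ} (hE : IsBounded E) {k : ℕ} (hk : k ≠ 0) (n : ℕ) :
    chebNorm ((· ^ k) ⁻¹' E) (k * n) = chebNorm E n := by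
  refine le_antisymm (le_chebNorm fun P hP hdeg => ?_) (le_chebNorm fun f hf hdeg => ?_)
  · rw [← Polynomial.biSup_norm_eval_expand hk]
    exact chebNorm_le_biSup_norm_eval (hP.expand (Nat.pos_of_ne_zero hk))
      (by rw [natDegree_expand, hdeg, mul_comm])
  · obtain ⟨hmonic, hdeg'⟩ := hf.contract_of_natDegree_eq_mul hk hdeg
    exact (chebNorm_le_biSup_norm_eval hmonic hdeg').trans
      (Polynomial.biSup_norm_eval_contract_le hE hk f)

theorem Estar_eq_preimage (m : ℕ) :
    Estar m = (· ^ m) ⁻¹' ((↑) '' Icc (-2 : ℝ) 2) := by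
  ext z
  simp [Estar]

theorem Estar_mul (m k : ℕ) : Estar (m * k) = (· ^ k) ⁻¹' Estar m := by
  ext z
  simp only [Estar, Set.mem_ofPred_eq, Set.mem_preimage, mul_comm m k, pow_mul]

theorem isBounded_Estar {m : ℕ} (hm : m ≠ 0) : IsBounded (Estar m) := by
  rw [Estar_eq_preimage]
  exact ((isCompact_Icc.image Complex.continuous_ofReal).isBounded).preimage_pow hm

theorem chebyshev_Estar_compose_pow_general (m k n : ℕ) (hm : 1 ≤ m) (hk : 1 ≤ k)
    (P : Polynomial ℂ) (hmonic : P.Monic) (hdeg : P.natDegree = n)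
    (hmin : (⨆ z ∈ Estar m, ‖P.eval z‖) = chebNorm (Estar m) n) :
    (P.comp (Polynomial.X ^ k)).Monic ∧
    (P.comp (Polynomial.X ^ k)).natDegree = k * n ∧
    (⨆ z ∈ Estar (m * k), ‖(P.comp (Polynomial.X ^ k)).eval z‖)
      = chebNorm (Estar (m * k)) (k * n) ∧
    chebNorm (Estar (m * k)) (k * n) = chebNorm (Estar m) n := by
  have hcheb : chebNorm (Estar (m * k)) (k * n) = chebNorm (Estar m) n := by
    rw [Estar_mul]
    exact chebNorm_preimage_pow (isBounded_Estar (by omega)) (by omega) n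
  rw [← expand_eq_comp_X_pow]
  refine ⟨hmonic.expand hk, by rw [natDegree_expand, hdeg, mul_comm], ?_, hcheb⟩
  rw [Estar_mul, Polynomial.biSup_norm_eval_expand (by omega), hmin, ← hcheb, Estar_mul]

/-- If `P` is the degree-`n` Chebyshev polynomial of `E_m`, then
`Q(z) = P(z^k)` is the degree-`kn` Chebyshev polynomial of `E_{mk}`;
in particular `t_{kn}(E_{mk}) = t_n(E_m)`. -/
theorem chebyshev_Estar_compose_pow (m k n : ℕ) (hm : 1 ≤ m) (hk : 1 ≤ k) (hn : 1 ≤ n)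
    (P : Polynomial ℂ) (hmonic : P.Monic) (hdeg : P.natDegree = n)
    (hmin : (⨆ z ∈ Estar m, ‖P.eval z‖) = chebNorm (Estar m) n) :
    (P.comp (Polynomial.X ^ k)).Monic ∧
    (P.comp (Polynomial.X ^ k)).natDegree = k * n ∧
    (⨆ z ∈ Estar (m * k), ‖(P.comp (Polynomial.X ^ k)).eval z‖)
      = chebNorm (Estar (m * k)) (k * n) ∧
    chebNorm (Estar (m * k)) (k * n) = chebNorm (Estar m) n :=
  chebyshev_Estar_compose_pow_general m k n hm hk P hmonic hdeg hmin
end
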